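/- Let μ, α, τ₀, σ be real numbers with μ > 0, α > 0, σ > 0 and α·τ₀ > μ, let τ(x) = τ₀·exp(−x²/(2σ²)), f(x) = (μ − α·τ(x))/(1 + α·τ(x)²/2), F(x) = ∫₀^x f(s) ds. Then F has exactly one root a in (0, ∞); moreover F(x) < 0 for 0 < x < a and F(x) > 0 for x > a. -/
import Mathlib

set_option maxHeartbeats 1000000 in
/-- **Unique positive root of the primitive.** For `α·τ₀ > μ > 0`, the primitive
`F(x) = ∫₀ˣ f` has exactly one root `a` in `(0, ∞)`; moreover `F < 0` on `(0, a)` and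
`F > 0` on `(a, ∞)`. -/
theorem primitive_unique_root
    (μ α τ₀ σ : ℝ) (hμ : 0 < μ) (hα : 0 < α) (hσ : 0 < σ) (hcrit : α * τ₀ > μ)
    (τ f F : ℝ → ℝ)
    (hτ : ∀ x, τ x = τ₀ * Real.exp (-x ^ 2 / (2 * σ ^ 2)))
    (hf : ∀ x, f x = (μ - α * τ x) / (1 + α * τ x ^ 2 / 2))
    (hF : ∀ x, F x = ∫ s in (0:ℝ)..x, f s) :
    ∃ a : ℝ, 0 < a ∧ F a = 0 ∧ (∀ x : ℝ, 0 < x → F x = 0 → x = a) ∧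
      (∀ x : ℝ, 0 < x → x < a → F x < 0) ∧ (∀ x : ℝ, a < x → 0 < F x) := by
  have hατ₀ : 0 < α * τ₀ := lt_trans hμ hcrit
  have hτ₀ : 0 < τ₀ := by nlinarith
  have h2σ : (0:ℝ) < 2 * σ ^ 2 := by positivity
  -- positivity of τ and of the denominator
  have hτpos : ∀ x, 0 < τ x := by
    intro x; rw [hτ x]; positivity
  have hden : ∀ x, 0 < 1 + α * τ x ^ 2 / 2 := by
    intro x
    have : 0 ≤ α * τ x ^ 2 := mul_nonneg hα.le (sq_nonneg _)
    linarith
  -- the log constant and the root of f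
  set L : ℝ := Real.log (α * τ₀ / μ) with hLdef
  have hL : 0 < L := Real.log_pos ((one_lt_div hμ).mpr hcrit)
  have hlogμ : Real.log (μ / (α * τ₀)) = -L := by
    rw [hLdef, ← Real.log_inv, inv_div]
  -- sign of the numerator
  have key : ∀ x : ℝ, (μ - α * τ x < 0 ↔ x ^ 2 < 2 * σ ^ 2 * L) ∧
      (0 < μ - α * τ x ↔ 2 * σ ^ 2 * L < x ^ 2) := by
    intro x
    rw [hτ x]
    have h1 : μ - α * (τ₀ * Real.exp (-x ^ 2 / (2 * σ ^ 2))) < 0 ↔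
        μ / (α * τ₀) < Real.exp (-x ^ 2 / (2 * σ ^ 2)) := by
      rw [div_lt_iff₀ hατ₀]
      constructor <;> intro h <;> nlinarith
    have h2 : 0 < μ - α * (τ₀ * Real.exp (-x ^ 2 / (2 * σ ^ 2))) ↔
        Real.exp (-x ^ 2 / (2 * σ ^ 2)) < μ / (α * τ₀) := by
      rw [lt_div_iff₀ hατ₀]
      constructor <;> intro h <;> nlinarith
    have hμd : 0 < μ / (α * τ₀) := by positivity
    rw [h1, h2, ← Real.log_lt_iff_lt_exp hμd, ← Real.lt_log_iff_exp_lt hμd, hlogμ]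
    rw [neg_div, lt_neg, neg_lt, div_lt_iff₀ h2σ, lt_div_iff₀ h2σ]
    constructor <;> constructor <;> intro h <;> nlinarith
  -- sign of f
  have hfneg : ∀ x : ℝ, x ^ 2 < 2 * σ ^ 2 * L → f x < 0 := by
    intro x hx
    rw [hf x]
    exact div_neg_of_neg_of_pos ((key x).1.mpr hx) (hden x)
  have hfpos : ∀ x : ℝ, 2 * σ ^ 2 * L < x ^ 2 → 0 < f x := by
    intro x hx
    rw [hf x]
    exact div_pos ((key x).2.mpr hx) (hden x)
  -- continuity
  have hτc : Continuous τ := by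
    have : τ = fun x => τ₀ * Real.exp (-x ^ 2 / (2 * σ ^ 2)) := funext hτ
    rw [this]; continuity
  have hfc : Continuous f := by
    have : f = fun x => (μ - α * τ x) / (1 + α * τ x ^ 2 / 2) := funext hf
    rw [this]
    exact (continuous_const.sub (continuous_const.mul hτc)).div
      (continuous_const.add ((continuous_const.mul (hτc.pow 2)).div_const 2))
      (fun x => (hden x).ne')
  -- derivative of F
  have hFd : ∀ x, HasDerivAt F (f x) x := by
    intro x
    have : HasDerivAt (fun u => ∫ s in (0:ℝ)..u, f s) (f x) x :=
      (hfc.integral_hasStrictDerivAt 0 x).hasDerivAt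
    have hFe : F = fun u => ∫ s in (0:ℝ)..u, f s := funext hF
    rw [hFe]; exact this
  have hFc : Continuous F := by
    rw [continuous_iff_continuousAt]; exact fun x => (hFd x).continuousAt
  have hF0 : F 0 = 0 := by rw [hF 0, intervalIntegral.integral_same]
  -- the root of f
  set x₀ : ℝ := Real.sqrt (2 * σ ^ 2 * L) with hx₀def
  have hx₀sq : x₀ ^ 2 = 2 * σ ^ 2 * L := Real.sq_sqrt (by positivity)
  have hx₀pos : 0 < x₀ := Real.sqrt_pos.mpr (by positivity)
  -- monotonicity
  have hanti : StrictAntiOn F (Set.Icc 0 x₀) := by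
    apply strictAntiOn_of_deriv_neg (convex_Icc 0 x₀) hFc.continuousOn
    intro x hx
    rw [interior_Icc] at hx
    rw [(hFd x).deriv]
    apply hfneg
    rw [← hx₀sq]
    exact pow_lt_pow_left₀ hx.2 hx.1.le (by norm_num)
  have hmono : StrictMonoOn F (Set.Ici x₀) := by
    apply strictMonoOn_of_deriv_pos (convex_Ici x₀) hFc.continuousOn
    intro x hx
    rw [interior_Ici] at hx
    rw [(hFd x).deriv]
    apply hfpos
    rw [← hx₀sq]
    exact pow_lt_pow_left₀ hx hx₀pos.le (by norm_num)
  have hFx₀ : F x₀ < 0 := by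
    have := hanti (Set.left_mem_Icc.mpr hx₀pos.le) (Set.right_mem_Icc.mpr hx₀pos.le) hx₀pos
    rw [hF0] at this; exact this
  -- a point where F is positive
  set L2 : ℝ := Real.log (2 * (α * τ₀) / μ) with hL2def
  have hL2 : 0 < L2 := Real.log_pos ((one_lt_div hμ).mpr (by linarith))
  set X : ℝ := Real.sqrt (2 * σ ^ 2 * L2) with hXdef
  have hXsq : X ^ 2 = 2 * σ ^ 2 * L2 := Real.sq_sqrt (by positivity)
  have hXpos : 0 < X := Real.sqrt_pos.mpr (by positivity)
  set D : ℝ := 1 + α * τ₀ ^ 2 / 2 with hDdef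
  have hD : 0 < D := by positivity
  set m : ℝ := (μ / 2) / D with hmdef
  have hm : 0 < m := by positivity
  have hτle : ∀ x, τ x ≤ τ₀ := by
    intro x
    rw [hτ x]
    have h0 : -x ^ 2 / (2 * σ ^ 2) ≤ 0 := by
      apply div_nonpos_of_nonpos_of_nonneg
      · nlinarith [sq_nonneg x]
      · positivity
    have h1 : Real.exp (-x ^ 2 / (2 * σ ^ 2)) ≤ 1 := Real.exp_le_one_iff.mpr h0
    calc τ₀ * Real.exp (-x ^ 2 / (2 * σ ^ 2)) ≤ τ₀ * 1 :=
          mul_le_mul_of_nonneg_left h1 hτ₀.le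
      _ = τ₀ := mul_one τ₀
  have hfd : ∀ x : ℝ, X ≤ x → m ≤ f x := by
    intro x hx
    have hx2 : 2 * σ ^ 2 * L2 ≤ x ^ 2 := by
      rw [← hXsq]; exact pow_le_pow_left₀ hXpos.le hx 2
    have hexp : Real.exp (-x ^ 2 / (2 * σ ^ 2)) ≤ μ / (2 * (α * τ₀)) := by
      have h1 : Real.exp (-x ^ 2 / (2 * σ ^ 2)) ≤ Real.exp (-L2) := by
        apply Real.exp_le_exp.mpr
        rw [neg_div, neg_le_neg_iff, le_div_iff₀ h2σ, mul_comm]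
        exact hx2
      have h2 : Real.exp (-L2) = μ / (2 * (α * τ₀)) := by
        rw [hL2def, ← Real.log_inv, Real.exp_log (by positivity), inv_div]
      linarith
    have hnum : μ / 2 ≤ μ - α * τ x := by
      rw [hτ x]
      have : α * (τ₀ * Real.exp (-x ^ 2 / (2 * σ ^ 2))) ≤ μ / 2 := by
        have := mul_le_mul_of_nonneg_left hexp (le_of_lt hατ₀)
        calc α * (τ₀ * Real.exp (-x ^ 2 / (2 * σ ^ 2)))
            = (α * τ₀) * Real.exp (-x ^ 2 / (2 * σ ^ 2)) := by ring
          _ ≤ (α * τ₀) * (μ / (2 * (α * τ₀))) := this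
          _ = μ / 2 := by field_simp
      linarith
    have hdle : 1 + α * τ x ^ 2 / 2 ≤ D := by
      have h1 : τ x ^ 2 ≤ τ₀ ^ 2 := pow_le_pow_left₀ (hτpos x).le (hτle x) 2
      have : α * τ x ^ 2 ≤ α * τ₀ ^ 2 := mul_le_mul_of_nonneg_left h1 hα.le
      rw [hDdef]; linarith
    rw [hf x, hmdef, le_div_iff₀ (hden x)]
    have h1 : μ / 2 / D * (1 + α * τ x ^ 2 / 2) ≤ μ / 2 / D * D :=
      mul_le_mul_of_nonneg_left hdle hm.le
    have h2 : μ / 2 / D * D = μ / 2 := div_mul_cancel₀ _ hD.ne'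
    linarith
  -- construct b with F b > 0
  set Y : ℝ := max X x₀ with hYdef
  set b : ℝ := Y + (1 + |F Y|) / m with hbdef
  have hYX : X ≤ Y := le_max_left _ _
  have hYx₀ : x₀ ≤ Y := le_max_right _ _
  have hYb : Y ≤ b := by
    rw [hbdef]
    have : 0 ≤ (1 + |F Y|) / m := by positivity
    linarith
  have hFb : 0 < F b := by
    have hint : F b = F Y + ∫ s in Y..b, f s := by
      rw [hF b, hF Y, intervalIntegral.integral_add_adjacent_intervals
        (hfc.intervalIntegrable _ _) (hfc.intervalIntegrable _ _)]
    have hlow : (b - Y) * m ≤ ∫ s in Y..b, f s := by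
      have := intervalIntegral.integral_mono_on hYb
        (intervalIntegrable_const (μ := MeasureTheory.volume) (c := m)) (hfc.intervalIntegrable _ _)
        (fun x hx => hfd x (le_trans hYX hx.1))
      rwa [intervalIntegral.integral_const, smul_eq_mul] at this
    have hbY : (b - Y) * m = 1 + |F Y| := by
      rw [hbdef]; field_simp; ring
    have := neg_abs_le (F Y)
    rw [hint]; rw [hbY] at hlow; linarith
  -- IVT gives the root a
  have hx₀b : x₀ ≤ b := le_trans hYx₀ hYb
  obtain ⟨a, ha, hFa⟩ := intermediate_value_Ioo hx₀b hFc.continuousOn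
    (show (0:ℝ) ∈ Set.Ioo (F x₀) (F b) from ⟨hFx₀, hFb⟩)
  have hax₀ : x₀ < a := ha.1
  have hapos : 0 < a := lt_trans hx₀pos hax₀
  have haIci : a ∈ Set.Ici x₀ := le_of_lt hax₀
  -- сигн facts
  have hneg : ∀ x : ℝ, 0 < x → x < a → F x < 0 := by
    intro x hx hxa
    rcases le_or_gt x x₀ with h | h
    · rcases eq_or_lt_of_le h with rfl | h'
      · exact hFx₀
      · have := hanti (Set.left_mem_Icc.mpr hx₀pos.le) ⟨hx.le, h⟩ hx
        rw [hF0] at this; exact this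
    · have := hmono (le_of_lt h) haIci hxa
      rw [hFa] at this; exact this
  have hpos : ∀ x : ℝ, a < x → 0 < F x := by
    intro x hx
    have := hmono haIci (le_of_lt (lt_trans hax₀ hx)) hx
    rw [hFa] at this; exact this
  refine ⟨a, hapos, hFa, ?_, hneg, hpos⟩
  intro x hx hFx
  rcases lt_trichotomy x a with h | h | h
  · exact absurd hFx (ne_of_lt (hneg x hx h))
  · exact h
  · exact absurd hFx (ne_of_gt (hpos x h))
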